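/- Fix n ≥ 1 and k ∈ ℝ with k ≠ 0. On jet points x = (x_0, x_1, …, x_{n−1}) ∈ ℝ^n define recursively r_{−1}(x) = 1/k, r_0(x) = x_0, and r_{j+1}(x) = Σ_{i=0}^{n−2} x_{i+1}·∂r_j/∂x_i (x) + k·x_0·r_j(x) for 0 ≤ j ≤ n−2 (the Riccati chain terms in jet coordinates). For 2 ≤ i ≤ n+1 define I_i(t,x) = Σ_{s=1}^{i} (−1)^{s+1} · t^{i−s}/(i−s)! · r_{n−s}(x)/r_{n−1}(x). Then at every point (t,x) with r_{n−1}(x) ≠ 0, the determinant of the n×n matrix (∂I_i/∂x_j)_{2≤i≤n+1, 0≤j≤n−1} equals (1/k)/(r_{n−1}(x))^{n+1}, which is nonzero; consequently the Jacobian of (I_2, …, I_{n+1}) with respect to (t, x_0, …, x_{n−1}) has rank n, i.e., I_{(n;2)}, …, I_{(n;n+1)} form a complete set of n functionally independent first integrals of the nth-order Riccati equation. -/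

import Mathlib

/-- The Riccati chain terms in jet coordinates `x = (x_0, …, x_{n-1})`:
`r_0(x) = x_0` and `r_{j+1}(x) = Σ_{i=0}^{n-2} x_{i+1}·∂r_j/∂x_i(x) + k·x_0·r_j(x)`. -/
noncomputable def jetR (n : ℕ) [NeZero n] (k : ℝ) : ℕ → (Fin n → ℝ) → ℝ
  | 0 => fun x => x 0
  | j + 1 => fun x =>
      (∑ i : Fin n, if h : (i : ℕ) + 1 < n then
        x ⟨(i : ℕ) + 1, h⟩ * fderiv ℝ (jetR n k j) x (Pi.single i 1) else 0)
      + k * x 0 * jetR n k j x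

/-- The Riccati jet chain extended by `r_{-1} = 1/k`, with the index shifted by one:
`jetRsh n k i = r_{i-1}`. -/
noncomputable def jetRsh (n : ℕ) [NeZero n] (k : ℝ) : ℕ → (Fin n → ℝ) → ℝ
  | 0 => fun _ => 1 / k
  | i + 1 => jetR n k i

section Aux

open Equiv

/-! ### projections and dependence -/

noncomputable def jproj (n : ℕ) (j : ℕ) : (Fin n → ℝ) →L[ℝ] (Fin n → ℝ) :=
  ContinuousLinearMap.pi (fun i => if (i : ℕ) ≤ j then ContinuousLinearMap.proj i else 0)

lemma jproj_apply (n j : ℕ) (x : Fin n → ℝ) (i : Fin n) :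
    jproj n j x i = if (i : ℕ) ≤ j then x i else 0 := by
  simp [jproj]; split <;> simp

lemma jproj_jproj (n : ℕ) {j m : ℕ} (h : j ≤ m) (x : Fin n → ℝ) :
    jproj n j (jproj n m x) = jproj n j x := by
  funext i
  simp only [jproj_apply]
  split <;> rename_i hi
  · rw [if_pos (le_trans hi h)]
  · rfl

lemma jproj_single_zero (n j : ℕ) {b : Fin n} (hb : j < (b : ℕ)) :
    jproj n j (Pi.single b (1:ℝ)) = 0 := by
  funext i
  simp only [jproj_apply, Pi.single_apply, Pi.zero_apply]
  split <;> rename_i hi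
  · rw [if_neg]; rintro rfl; omega
  · rfl

def DepOn {n : ℕ} (f : (Fin n → ℝ) → ℝ) (j : ℕ) : Prop :=
  ∀ x, f (jproj n j x) = f x

lemma DepOn.fderiv_eq {n : ℕ} {f : (Fin n → ℝ) → ℝ} {j : ℕ}
    (hf : Differentiable ℝ f) (h : DepOn f j) (x v : Fin n → ℝ) :
    fderiv ℝ f x v = fderiv ℝ f (jproj n j x) (jproj n j v) := by
  have hfor : f = (f ∘ (jproj n j)) := funext fun y => (h y).symm
  conv_lhs => rw [hfor]
  rw [fderiv_comp x (hf _) (jproj n j).differentiableAt, (jproj n j).fderiv]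
  rfl

lemma DepOn.mono {n : ℕ} {f : (Fin n → ℝ) → ℝ} {j m : ℕ}
    (hjm : j ≤ m) (h : DepOn f j) : DepOn f m := by
  intro x
  rw [← h (jproj n m x), jproj_jproj n hjm, h x]

lemma DepOn.fderiv_single_zero {n : ℕ} {f : (Fin n → ℝ) → ℝ} {j : ℕ}
    (hf : Differentiable ℝ f) (h : DepOn f j) {b : Fin n} (hb : j < (b : ℕ))
    (x : Fin n → ℝ) : fderiv ℝ f x (Pi.single b 1) = 0 := by
  rw [h.fderiv_eq hf, jproj_single_zero n j hb, map_zero]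

lemma DepOn.pd {n : ℕ} {f : (Fin n → ℝ) → ℝ} {j : ℕ}
    (hf : Differentiable ℝ f) (h : DepOn f j) (v : Fin n → ℝ) :
    DepOn (fun x => fderiv ℝ f x v) j := by
  intro x
  simp only []
  rw [h.fderiv_eq hf (jproj n j x), h.fderiv_eq hf x, jproj_jproj n (le_refl j)]

/-! ### smoothness of jetR -/

variable {n : ℕ} [NeZero n] {k : ℝ}

lemma jetR_succ (j : ℕ) : jetR n k (j+1) = fun x =>
      (∑ i : Fin n, if h : (i : ℕ) + 1 < n then
        x ⟨(i : ℕ) + 1, h⟩ * fderiv ℝ (jetR n k j) x (Pi.single i 1) else 0)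
      + k * x 0 * jetR n k j x := rfl

omit [NeZero n] in
lemma contDiff_coord (c : Fin n) : ContDiff ℝ (⊤ : ℕ∞) (fun y : Fin n → ℝ => y c) :=
  (ContinuousLinearMap.proj c : (Fin n → ℝ) →L[ℝ] ℝ).contDiff

lemma contDiff_jetR (j : ℕ) : ContDiff ℝ (⊤ : ℕ∞) (jetR n k j) := by
  induction j with
  | zero => exact contDiff_coord 0
  | succ j ih =>
    rw [jetR_succ]
    have hg : ∀ i : Fin n, ContDiff ℝ (⊤ : ℕ∞) (fun x => fderiv ℝ (jetR n k j) x (Pi.single i 1)) := by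
      intro i
      exact (ih.fderiv_right (le_of_eq (by simp))).clm_apply contDiff_const
    refine ContDiff.add ?_ ((contDiff_const.mul (contDiff_coord 0)).mul ih)
    refine ContDiff.sum (fun i _ => ?_)
    by_cases h : (i : ℕ) + 1 < n
    · simp only [dif_pos h]
      exact (contDiff_coord _).mul (hg i)
    · simp only [dif_neg h]
      exact contDiff_const

lemma diff_jetR (j : ℕ) : Differentiable ℝ (jetR n k j) :=
  (contDiff_jetR j).differentiable (by simp)

lemma diff_pd_jetR (j : ℕ) (i : Fin n) :
    Differentiable ℝ (fun x => fderiv ℝ (jetR n k j) x (Pi.single i 1)) :=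
  ((((contDiff_jetR (k := k) j).fderiv_right (m := (⊤ : ℕ∞)) (le_of_eq (by simp))).clm_apply
    contDiff_const)).differentiable (by simp)

lemma diff_jetRsh (i : ℕ) : Differentiable ℝ (jetRsh n k i) := by
  cases i with
  | zero => exact (differentiable_const _)
  | succ i => exact diff_jetR i

omit [NeZero n] in
lemma fderiv_coord_apply (c : Fin n) (x v : Fin n → ℝ) :
    fderiv ℝ (fun y : Fin n → ℝ => y c) x v = v c := by
  rw [show (fun y : Fin n → ℝ => y c) = (ContinuousLinearMap.proj c : (Fin n → ℝ) →L[ℝ] ℝ) from rfl,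
    ContinuousLinearMap.fderiv]
  rfl

lemma fderiv_coord_mul_apply (c : Fin n) (g : (Fin n → ℝ) → ℝ) {x : Fin n → ℝ}
    (hg : DifferentiableAt ℝ g x) (v : Fin n → ℝ) :
    fderiv ℝ (fun y => y c * g y) x v = v c * g x + x c * fderiv ℝ g x v := by
  rw [fderiv_fun_mul ((contDiff_coord c).differentiable (by simp) x) hg]
  simp only [ContinuousLinearMap.add_apply, ContinuousLinearMap.smul_apply, smul_eq_mul]
  rw [fderiv_coord_apply]
  ring

lemma fderiv_jetR_succ_apply (j : ℕ) (x v : Fin n → ℝ) :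
    fderiv ℝ (jetR n k (j+1)) x v =
    (∑ i : Fin n, if h : (i : ℕ) + 1 < n then
        v ⟨(i : ℕ) + 1, h⟩ * fderiv ℝ (jetR n k j) x (Pi.single i 1)
        + x ⟨(i : ℕ) + 1, h⟩ *
            fderiv ℝ (fun y => fderiv ℝ (jetR n k j) y (Pi.single i 1)) x v
      else 0)
    + (k * v 0 * jetR n k j x + k * x 0 * fderiv ℝ (jetR n k j) x v) := by
  rw [jetR_succ]
  have hterm : ∀ i : Fin n, DifferentiableAt ℝ
      (fun y => if h : (i : ℕ) + 1 < n then
        y ⟨(i : ℕ) + 1, h⟩ * fderiv ℝ (jetR n k j) y (Pi.single i 1) else 0) x := by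
    intro i
    by_cases h : (i : ℕ) + 1 < n
    · simp only [dif_pos h]
      exact (((contDiff_coord _).differentiable (by simp) x).mul (diff_pd_jetR j i x))
    · simp only [dif_neg h]; exact differentiableAt_const 0
  have hsum : DifferentiableAt ℝ (fun y : Fin n → ℝ => ∑ i : Fin n, if h : (i : ℕ) + 1 < n then
        y ⟨(i : ℕ) + 1, h⟩ * fderiv ℝ (jetR n k j) y (Pi.single i 1) else 0) x :=
    DifferentiableAt.fun_sum (fun i _ => hterm i)
  have hB : DifferentiableAt ℝ (fun y : Fin n → ℝ => k * y 0 * jetR n k j y) x :=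
    ((differentiableAt_const k).mul ((contDiff_coord 0).differentiable (by simp) x)).mul
      (diff_jetR j x)
  rw [fderiv_fun_add hsum hB, ContinuousLinearMap.add_apply]
  congr 1
  · rw [fderiv_fun_sum (fun i _ => hterm i), ContinuousLinearMap.sum_apply]
    refine Finset.sum_congr rfl (fun i _ => ?_)
    by_cases h : (i : ℕ) + 1 < n
    · simp only [dif_pos h]
      exact fderiv_coord_mul_apply _ _ (diff_pd_jetR j i x) v
    · simp only [dif_neg h]
      rw [fderiv_fun_const]
      rfl
  · have : (fun y : Fin n → ℝ => k * y 0 * jetR n k j y)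
        = fun y => (fun z : Fin n → ℝ => k * z 0) y * jetR n k j y := rfl
    rw [this, fderiv_fun_mul (show DifferentiableAt ℝ (fun z : Fin n → ℝ => k * z 0) x from (differentiableAt_const k).mul
      ((contDiff_coord 0).differentiable (by simp) x)) (diff_jetR j x)]
    simp only [ContinuousLinearMap.add_apply, ContinuousLinearMap.smul_apply, smul_eq_mul]
    have h0 : fderiv ℝ (fun z : Fin n → ℝ => k * z 0) x v = k * v 0 := by
      rw [fderiv_const_mul ((contDiff_coord 0).differentiable (by simp) x)]
      simp only [ContinuousLinearMap.smul_apply, smul_eq_mul]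
      rw [fderiv_coord_apply]
    rw [h0]
    ring

/-! ### dependence and partial derivatives of jetR -/

lemma jetR_depOn (j : ℕ) : DepOn (jetR n k j) j := by
  induction j with
  | zero =>
    intro x
    show (jproj n 0 x) 0 = x 0
    rw [jproj_apply]
    simp
  | succ j ih =>
    intro x
    rw [jetR_succ]
    simp only []
    congr 1
    · refine Finset.sum_congr rfl (fun i _ => ?_)
      by_cases h : (i : ℕ) + 1 < n
      · simp only [dif_pos h]
        by_cases hij : (i : ℕ) ≤ j
        · rw [jproj_apply, if_pos (show ((⟨(i:ℕ)+1, h⟩ : Fin n) : ℕ) ≤ j + 1 by simp; omega)]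
          congr 1
          exact ((ih.pd (diff_jetR j) (Pi.single i 1)).mono (Nat.le_succ j)) x
        · rw [ih.fderiv_single_zero (diff_jetR j) (by omega : j < (i : ℕ)) (jproj n (j+1) x),
            ih.fderiv_single_zero (diff_jetR j) (by omega : j < (i : ℕ)) x]
          ring
      · simp only [dif_neg h]
    · rw [jproj_apply, if_pos (by simp : ((0 : Fin n) : ℕ) ≤ j + 1)]
      congr 1
      exact (ih.mono (Nat.le_succ j)) x

lemma pd_jetR_zero (j : ℕ) {b : Fin n} (hb : j < (b : ℕ)) (x : Fin n → ℝ) :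
    fderiv ℝ (jetR n k j) x (Pi.single b 1) = 0 :=
  (jetR_depOn j).fderiv_single_zero (diff_jetR j) hb x

lemma pd_jetR_diag : ∀ (j : ℕ) (hj : j < n) (x : Fin n → ℝ),
    fderiv ℝ (jetR n k j) x (Pi.single (⟨j, hj⟩ : Fin n) 1) = 1 := by
  intro j
  induction j with
  | zero =>
    intro hj x
    show fderiv ℝ (fun x : Fin n → ℝ => x 0) x _ = 1
    rw [fderiv_coord_apply]
    rw [show (⟨0, hj⟩ : Fin n) = 0 from rfl]
    simp
  | succ j ih =>
    intro hj x
    set b : Fin n := ⟨j+1, hj⟩ with hbdef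
    rw [fderiv_jetR_succ_apply]
    have hsum : (∑ i : Fin n, if h : (i : ℕ) + 1 < n then
        (Pi.single b 1 : Fin n → ℝ) ⟨(i : ℕ) + 1, h⟩ * fderiv ℝ (jetR n k j) x (Pi.single i 1)
        + x ⟨(i : ℕ) + 1, h⟩ *
            fderiv ℝ (fun y => fderiv ℝ (jetR n k j) y (Pi.single i 1)) x (Pi.single b 1)
      else 0) = 1 := by
      have hjn : j < n := by omega
      rw [Finset.sum_eq_single_of_mem (⟨j, hjn⟩ : Fin n) (Finset.mem_univ _)]
      · rw [dif_pos (by simpa using hj)]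
        have h1 : (Pi.single b 1 : Fin n → ℝ) ⟨((⟨j, hjn⟩ : Fin n) : ℕ) + 1, by simpa using hj⟩ = 1 := by
          rw [show (⟨((⟨j, hjn⟩ : Fin n) : ℕ) + 1, by simpa using hj⟩ : Fin n) = b by
            apply Fin.ext; simp [hbdef]]
          simp
        rw [h1, ih hjn x]
        rw [((jetR_depOn j).pd (diff_jetR j) (Pi.single ⟨j, hjn⟩ 1)).fderiv_single_zero
          (diff_pd_jetR j _) (by simp [hbdef] : j < (b : ℕ)) x]
        ring
      · intro i _ hne
        by_cases h : (i : ℕ) + 1 < n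
        · rw [dif_pos h]
          have h1 : (Pi.single b 1 : Fin n → ℝ) ⟨(i : ℕ) + 1, h⟩ = 0 := by
            rw [Pi.single_apply, if_neg]
            intro hcontra
            apply hne
            apply Fin.ext
            have : (i : ℕ) + 1 = j + 1 := by
              simpa [hbdef] using congrArg (Fin.val) hcontra
            simpa using this
          rw [h1, ((jetR_depOn j).pd (diff_jetR j) (Pi.single i 1)).fderiv_single_zero
            (diff_pd_jetR j _) (by simp [hbdef] : j < (b : ℕ)) x]
          ring
        · rw [dif_neg h]
    rw [hsum]
    have h0 : (Pi.single b 1 : Fin n → ℝ) 0 = 0 := by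
      rw [Pi.single_apply, if_neg]
      intro hcontra
      have := congrArg Fin.val hcontra
      simp [hbdef] at this
    rw [h0, pd_jetR_zero j (by simp [hbdef] : j < (b : ℕ))]
    ring

/-! ### sign of the reversal -/

lemma rev_decomp (N : ℕ) : (Fin.revPerm : Perm (Fin (N+1))) =
    Equiv.Perm.decomposeFin.symm (0, (Fin.revPerm : Perm (Fin N))) * finRotate (N+1) := by
  ext a
  rw [Equiv.Perm.mul_apply, finRotate_succ_apply]
  induction a using Fin.lastCases with
  | last =>
    have h1 : (Fin.last N) + 1 = 0 := by
      apply Fin.ext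
      rw [Fin.val_add_one]
      simp
    rw [h1, Equiv.Perm.decomposeFin_symm_apply_zero]
    simp [Fin.rev_last]
  | cast i =>
    have h1 : (Fin.castSucc i) + 1 = i.succ := by
      apply Fin.ext
      rw [Fin.val_add_one, if_neg]
      · simp
      · intro hcon
        have := congrArg Fin.val hcon
        simp [Fin.val_last] at this
        omega
    rw [h1, Equiv.Perm.decomposeFin_symm_apply_succ]
    simp only [swap_self, Equiv.refl_apply, Fin.revPerm_apply, Fin.ext_iff,
      Fin.val_rev, Fin.val_succ, Fin.coe_castSucc]
    omega

lemma sign_revPerm_fin : ∀ N : ℕ, Equiv.Perm.sign (Fin.revPerm : Perm (Fin N))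
    = (-1) ^ (∑ i ∈ Finset.range N, i) := by
  intro N
  induction N with
  | zero =>
    simp [show (Fin.revPerm : Perm (Fin 0)) = 1 from Subsingleton.elim _ _]
  | succ N ih =>
    rw [rev_decomp N, map_mul, Equiv.Perm.decomposeFin.symm_sign, if_pos rfl, one_mul,
      ih, sign_finRotate, Finset.sum_range_succ, pow_add, Nat.add_sub_cancel]

/-! ### quotient rule -/

omit [NeZero n] in
lemma hasFDerivAt_div' (f g : (Fin n → ℝ) → ℝ) {x : Fin n → ℝ}
    (hf : DifferentiableAt ℝ f x) (hg : DifferentiableAt ℝ g x) (hgx : g x ≠ 0) :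
    HasFDerivAt (fun y => f y / g y)
      (f x • ((-(g x ^ 2)⁻¹) • fderiv ℝ g x) + (g x)⁻¹ • fderiv ℝ f x) x := by
  have hinv : HasFDerivAt (fun y => (g y)⁻¹) ((-(g x ^ 2)⁻¹) • fderiv ℝ g x) x :=
    (hasDerivAt_inv hgx).comp_hasFDerivAt x hg.hasFDerivAt
  have hmul : HasFDerivAt (fun y => f y * (g y)⁻¹) _ x := hf.hasFDerivAt.mul hinv
  simpa [div_eq_mul_inv] using hmul

omit [NeZero n] in
lemma diffAt_div' (f g : (Fin n → ℝ) → ℝ) {x : Fin n → ℝ}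
    (hf : DifferentiableAt ℝ f x) (hg : DifferentiableAt ℝ g x) (hgx : g x ≠ 0) :
    DifferentiableAt ℝ (fun y => f y / g y) x :=
  (hasFDerivAt_div' f g hf hg hgx).differentiableAt

omit [NeZero n] in
lemma fderiv_div_apply' (f g : (Fin n → ℝ) → ℝ) {x : Fin n → ℝ}
    (hf : DifferentiableAt ℝ f x) (hg : DifferentiableAt ℝ g x) (hgx : g x ≠ 0)
    (v : Fin n → ℝ) :
    fderiv ℝ (fun y => f y / g y) x v =
      (fderiv ℝ f x v * g x - f x * fderiv ℝ g x v) / g x ^ 2 := by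
  rw [(hasFDerivAt_div' f g hf hg hgx).fderiv]
  simp only [ContinuousLinearMap.add_apply, ContinuousLinearMap.smul_apply, smul_eq_mul]
  field_simp
  ring

end Aux

section Part2

open Equiv Matrix Finset

variable {n : ℕ} [NeZero n] {k : ℝ}

lemma jetRsh_zero : jetRsh n k 0 = fun _ => 1/k := rfl
lemma jetRsh_succ (i : ℕ) : jetRsh n k (i+1) = jetR n k i := rfl

lemma Ientry (t : ℝ) (x : Fin n → ℝ) (hr : jetR n k (n-1) x ≠ 0) (a : ℕ) (b : Fin n) :
    fderiv ℝ (fun y => ∑ s ∈ Finset.Icc 1 (a + 2),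
        (-1:ℝ)^(s+1) * t^(a+2-s)/(a+2-s).factorial * (jetRsh n k (n+1-s) y / jetR n k (n-1) y)) x
      (Pi.single b 1)
    = ∑ s ∈ Finset.Icc 1 (a+2), (-1:ℝ)^(s+1) * t^(a+2-s)/(a+2-s).factorial *
        ((fderiv ℝ (jetRsh n k (n+1-s)) x (Pi.single b 1) * jetR n k (n-1) x
          - jetRsh n k (n+1-s) x * fderiv ℝ (jetR n k (n-1)) x (Pi.single b 1))
          / (jetR n k (n-1) x)^2) := by
  have hdiv : ∀ s : ℕ, DifferentiableAt ℝ (fun y => jetRsh n k (n+1-s) y / jetR n k (n-1) y) x :=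
    fun s => diffAt_div' _ _ ((diff_jetRsh _) x) ((diff_jetR _) x) hr
  have hterm : ∀ s ∈ Finset.Icc 1 (a+2), DifferentiableAt ℝ
      (fun y => (-1:ℝ)^(s+1) * t^(a+2-s)/(a+2-s).factorial *
        (jetRsh n k (n+1-s) y / jetR n k (n-1) y)) x := by
    intro s _
    exact ((hdiv s).const_mul _)
  rw [fderiv_fun_sum hterm, ContinuousLinearMap.sum_apply]
  refine Finset.sum_congr rfl (fun s _ => ?_)
  rw [fderiv_const_mul (hdiv s), ContinuousLinearMap.smul_apply, smul_eq_mul,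
    fderiv_div_apply' _ _ ((diff_jetRsh _) x) ((diff_jetR _) x) hr]

/-! ### the matrices -/

noncomputable def CmM (n : ℕ) (t : ℝ) : Matrix (Fin n) (Fin n) ℝ :=
  Matrix.of fun a s => if (s:ℕ) ≤ (a:ℕ) then
    (-1:ℝ)^((s:ℕ)+3) * t^((a:ℕ)-(s:ℕ))/((a:ℕ)-(s:ℕ)).factorial else 0

noncomputable def vbF (n : ℕ) [NeZero n] (k : ℝ) (x : Fin n → ℝ) : Fin n → ℝ :=
  fun b => fderiv ℝ (jetR n k (n-1)) x (Pi.single b 1)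

noncomputable def uuF (n : ℕ) [NeZero n] (k : ℝ) (x : Fin n → ℝ) : Fin n → ℝ :=
  fun s => jetRsh n k (n-1-(s:ℕ)) x

noncomputable def AAM (n : ℕ) [NeZero n] (k : ℝ) (x : Fin n → ℝ) : Matrix (Fin n) (Fin n) ℝ :=
  Matrix.of fun s b => fderiv ℝ (jetRsh n k (n-1-(s:ℕ))) x (Pi.single b 1)

noncomputable def DmM (n : ℕ) [NeZero n] (k : ℝ) (x : Fin n → ℝ) : Matrix (Fin n) (Fin n) ℝ :=
  Matrix.of fun s b =>
    (AAM n k x s b * jetR n k (n-1) x - uuF n k x s * vbF n k x b) / (jetR n k (n-1) x)^2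

noncomputable def EmM (n : ℕ) [NeZero n] (k : ℝ) (x : Fin n → ℝ) : Matrix (Fin n) (Fin n) ℝ :=
  Matrix.of fun s b => AAM n k x s b * jetR n k (n-1) x - uuF n k x s * vbF n k x b

noncomputable def LmM (n : ℕ) [NeZero n] (k : ℝ) (x : Fin n → ℝ) : Matrix (Fin n) (Fin n) ℝ :=
  Matrix.of fun s s' => if s = s' then (1:ℝ) else if (s':ℕ) = n-1 then k * uuF n k x s else 0

noncomputable def GmM (n : ℕ) [NeZero n] (k : ℝ) (x : Fin n → ℝ) : Matrix (Fin n) (Fin n) ℝ :=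
  Matrix.of fun s b => if (s:ℕ) = n-1 then -(1/k) * vbF n k x b
    else AAM n k x s b * jetR n k (n-1) x

/-! ### the reversal-type permutation -/

def sgFun (n : ℕ) : Fin n → Fin n :=
  fun a => if h : (a:ℕ) < n-1 then ⟨n-2-(a:ℕ), by omega⟩ else a

lemma sgFun_invol (n : ℕ) : Function.Involutive (sgFun n) := by
  intro a
  unfold sgFun
  split_ifs with h1 h2
  · rw [Fin.ext_iff]
    simp only [Fin.val_mk] at *
    omega
  · exfalso
    simp only [Fin.val_mk] at h2
    omega
  · rfl

def sg (n : ℕ) : Equiv.Perm (Fin n) := Function.Involutive.toPerm (sgFun n) (sgFun_invol n)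

lemma sg_apply (n : ℕ) (a : Fin n) :
    sg n a = if h : (a:ℕ) < n-1 then (⟨n-2-(a:ℕ), by omega⟩ : Fin n) else a := rfl

lemma sg_eq (N : ℕ) :
    (sg (N+1) : Perm (Fin (N+1))) = (Fin.revPerm : Perm (Fin (N+1))) * finRotate (N+1) := by
  ext a
  rw [Equiv.Perm.mul_apply, finRotate_succ_apply, sg_apply]
  by_cases h : (a:ℕ) < N
  · rw [dif_pos (by simpa using h)]
    have hval : ((a+1 : Fin (N+1)) : ℕ) = (a:ℕ) + 1 := by
      rw [Fin.val_add_one, if_neg]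
      intro hcon
      have := congrArg Fin.val hcon
      simp [Fin.val_last] at this
      omega
    simp only [Fin.revPerm_apply, Fin.ext_iff, Fin.val_rev, hval]
    omega
  · rw [dif_neg (by simpa using h)]
    have ha : (a:ℕ) = N := by have := a.isLt; omega
    have haL : a = Fin.last N := by rw [Fin.ext_iff, ha]; simp
    have hval : (a+1 : Fin (N+1)) = 0 := by
      rw [Fin.ext_iff, Fin.val_add_one, if_pos haL]
      simp
    rw [hval]
    simp only [Fin.revPerm_apply, Fin.ext_iff, Fin.val_rev, ha]
    simp

lemma sign_sg (N : ℕ) : Equiv.Perm.sign (sg (N+1))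
    = (-1) ^ ((∑ i ∈ Finset.range (N+1), i) + N) := by
  rw [sg_eq, _root_.map_mul, sign_revPerm_fin, sign_finRotate, pow_add, Nat.add_sub_cancel]

end Part2

section Part3

open Equiv Matrix Finset

variable {n : ℕ} [NeZero n] {k : ℝ}

lemma det_CmM (t : ℝ) :
    (CmM n t).det = (-1:ℝ) ^ (∑ i ∈ Finset.range n, (i+3)) := by
  rw [Matrix.det_of_lowerTriangular (CmM n t) (by
    intro i j hij
    have : (i:ℕ) < (j:ℕ) := hij
    exact if_neg (by omega))]
  have hdiag : ∀ i : Fin n, CmM n t i i = (-1:ℝ)^((i:ℕ)+3) := by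
    intro i
    show (if (i:ℕ) ≤ (i:ℕ) then _ else _) = _
    rw [if_pos le_rfl, Nat.sub_self]
    simp
  rw [Finset.prod_congr rfl (fun i _ => hdiag i), Finset.prod_pow_eq_pow_sum]
  congr 1
  exact Fin.sum_univ_eq_sum_range (fun i => i + 3) n

lemma det_LmM (x : Fin n → ℝ) : (LmM n k x).det = 1 := by
  rw [Matrix.det_of_upperTriangular (by
    intro i j hij
    have hlt : (j:ℕ) < (i:ℕ) := hij
    show (if i = j then (1:ℝ) else if (j:ℕ) = n-1 then k * uuF n k x i else 0) = 0
    rw [if_neg (by intro hcon; subst hcon; omega), if_neg (by have := i.isLt; omega)])]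
  have hdiag : ∀ i : Fin n, LmM n k x i i = 1 := fun i => if_pos rfl
  rw [Finset.prod_congr rfl (fun i _ => hdiag i), Finset.prod_const_one]

lemma EmM_eq_mul (hk : k ≠ 0) (x : Fin n → ℝ) : EmM n k x = LmM n k x * GmM n k x := by
  ext s b
  rw [Matrix.mul_apply]
  by_cases hs : (s:ℕ) = n-1
  · rw [Finset.sum_eq_single s]
    · show (_ : ℝ) = (if s = s then (1:ℝ) else _) * _
      rw [if_pos rfl, one_mul]
      show AAM n k x s b * jetR n k (n-1) x - uuF n k x s * vbF n k x b
        = if (s:ℕ) = n-1 then -(1/k) * vbF n k x b else _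
      rw [if_pos hs]
      have hu : uuF n k x s = 1/k := by
        show jetRsh n k (n-1-(s:ℕ)) x = 1/k
        rw [show n-1-(s:ℕ) = 0 by omega, jetRsh_zero]
      have hA : AAM n k x s b = 0 := by
        show fderiv ℝ (jetRsh n k (n-1-(s:ℕ))) x (Pi.single b 1) = 0
        rw [show n-1-(s:ℕ) = 0 by omega, jetRsh_zero, fderiv_fun_const]
        rfl
      rw [hu, hA]
      ring
    · intro s' _ hne
      show (if s = s' then (1:ℝ) else if (s':ℕ) = n-1 then k * uuF n k x s else 0) * _ = 0
      rw [if_neg (fun hcon => hne hcon.symm), if_neg (by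
        intro hcon
        exact hne (Fin.ext (by omega)))]
      ring
    · intro hcon
      exact absurd (Finset.mem_univ s) hcon
  · have hlst : (⟨n-1, by have := NeZero.pos n; omega⟩ : Fin n) ∈ Finset.univ.erase s := by
      refine Finset.mem_erase.mpr ⟨?_, Finset.mem_univ _⟩
      intro hcon
      apply hs
      rw [← hcon]
    rw [← Finset.add_sum_erase _ _ (Finset.mem_univ s),
      Finset.sum_eq_single_of_mem _ hlst]
    · show (_:ℝ) = (if s = s then (1:ℝ) else _) * _ + (if s = ⟨n-1, by have := NeZero.pos n; omega⟩ then (1:ℝ) else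
        if ((⟨n-1, by have := NeZero.pos n; omega⟩ : Fin n):ℕ) = n-1 then k * uuF n k x s else 0) * _
      rw [if_pos rfl, if_neg (by
          intro hcon
          apply hs
          rw [hcon]), if_pos rfl]
      show AAM n k x s b * jetR n k (n-1) x - uuF n k x s * vbF n k x b
        = 1 * (if (s:ℕ) = n-1 then _ else AAM n k x s b * jetR n k (n-1) x)
          + (k * uuF n k x s) * (if ((⟨n-1, by have := NeZero.pos n; omega⟩ : Fin n):ℕ) = n-1
              then -(1/k) * vbF n k x b else _)
      rw [if_neg hs, if_pos rfl]
      field_simp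
      ring
    · intro s' hs' hne
      have hs'1 : s' ≠ s := (Finset.mem_erase.mp hs').1
      show (if s = s' then (1:ℝ) else if (s':ℕ) = n-1 then k * uuF n k x s else 0) * _ = 0
      rw [if_neg (fun hcon => hs'1 hcon.symm), if_neg (by
        intro hcon
        exact hne (Fin.ext (by simp [hcon])))]
      ring

lemma det_GmM_perm (hk : k ≠ 0) (x : Fin n → ℝ) (hr : jetR n k (n-1) x ≠ 0) :
    (Matrix.det fun i => GmM n k x (sg n i)) = -(1/k) * (jetR n k (n-1) x)^(n-1) := by
  have hlow : (Matrix.of fun a b => GmM n k x (sg n a) b).BlockTriangular OrderDual.toDual := by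
    intro a b hab
    have hab' : (a:ℕ) < (b:ℕ) := hab
    show GmM n k x (sg n a) b = 0
    have ha : (a:ℕ) < n-1 := by have := b.isLt; omega
    rw [sg_apply, dif_pos ha]
    show (if ((⟨n-2-(a:ℕ), _⟩ : Fin n):ℕ) = n-1 then _ else
      AAM n k x ⟨n-2-(a:ℕ), _⟩ b * jetR n k (n-1) x) = 0
    rw [if_neg (by simp; omega)]
    show fderiv ℝ (jetRsh n k (n-1-((⟨n-2-(a:ℕ), _⟩ : Fin n):ℕ))) x (Pi.single b 1)
      * jetR n k (n-1) x = 0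
    rw [show n-1-((⟨n-2-(a:ℕ), by omega⟩ : Fin n):ℕ) = (a:ℕ)+1 by simp; omega, jetRsh_succ,
      pd_jetR_zero (a:ℕ) hab' x]
    ring
  have hdet := Matrix.det_of_lowerTriangular _ hlow
  have hdiag : ∀ a : Fin n, (Matrix.of fun a b => GmM n k x (sg n a) b) a a
      = if (a:ℕ) = n-1 then -(1/k) else jetR n k (n-1) x := by
    intro a
    by_cases ha : (a:ℕ) < n-1
    · rw [if_neg (by omega)]
      show GmM n k x (sg n a) a = _
      rw [sg_apply, dif_pos ha]
      show (if ((⟨n-2-(a:ℕ), _⟩ : Fin n):ℕ) = n-1 then _ else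
        AAM n k x ⟨n-2-(a:ℕ), _⟩ a * jetR n k (n-1) x) = _
      rw [if_neg (by simp; omega)]
      show fderiv ℝ (jetRsh n k (n-1-((⟨n-2-(a:ℕ), _⟩ : Fin n):ℕ))) x (Pi.single a 1)
        * jetR n k (n-1) x = _
      rw [show n-1-((⟨n-2-(a:ℕ), by omega⟩ : Fin n):ℕ) = (a:ℕ)+1 by simp; omega, jetRsh_succ]
      have := pd_jetR_diag (k := k) (a:ℕ) a.isLt x
      rw [Fin.eta] at this
      rw [this, one_mul]
    · have ha' : (a:ℕ) = n-1 := by have := a.isLt; omega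
      rw [if_pos ha']
      show GmM n k x (sg n a) a = _
      rw [sg_apply, dif_neg ha]
      show (if (a:ℕ) = n-1 then -(1/k) * vbF n k x a else _) = _
      rw [if_pos ha']
      have hv : vbF n k x a = 1 := by
        show fderiv ℝ (jetR n k (n-1)) x (Pi.single a 1) = 1
        have := pd_jetR_diag (k := k) (n-1) (by have := NeZero.pos n; omega) x
        rw [show (⟨n-1, by have := NeZero.pos n; omega⟩ : Fin n) = a from Fin.ext (by simp [ha'])] at this
        exact this
      rw [hv, mul_one]
  rw [show (Matrix.det fun i => GmM n k x (sg n i))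
      = (Matrix.of fun a b => GmM n k x (sg n a) b).det from rfl, hdet,
    Finset.prod_congr rfl (fun a _ => hdiag a)]
  have hlstmem : (⟨n-1, by have := NeZero.pos n; omega⟩ : Fin n) ∈ Finset.univ := Finset.mem_univ _
  rw [← Finset.mul_prod_erase _ _ hlstmem, if_pos rfl]
  congr 1
  have hconst : ∀ a ∈ Finset.univ.erase (⟨n-1, by have := NeZero.pos n; omega⟩ : Fin n),
      (if (a:ℕ) = n-1 then -(1/k) else jetR n k (n-1) x) = jetR n k (n-1) x := by
    intro a ha
    rw [if_neg]
    intro hcon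
    exact (Finset.mem_erase.mp ha).1 (Fin.ext (by simp [hcon]))
  rw [Finset.prod_congr rfl hconst, Finset.prod_const, Finset.card_erase_of_mem hlstmem]
  congr 1
  simp

end Part3

section Part4

open Equiv Matrix Finset

variable {n : ℕ} [NeZero n] {k : ℝ}

lemma sign_sg' (hn : 1 ≤ n) :
    Equiv.Perm.sign (sg n) = (-1) ^ ((∑ i ∈ Finset.range n, i) + (n-1)) := by
  obtain ⟨N, rfl⟩ : ∃ N, n = N + 1 := ⟨n-1, by omega⟩
  simpa using sign_sg N

lemma det_main (hn : 1 ≤ n) (hk : k ≠ 0) (t : ℝ) (x : Fin n → ℝ)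
    (hr : jetR n k (n-1) x ≠ 0) :
    (CmM n t * DmM n k x).det = (1/k) / (jetR n k (n-1) x)^(n+1) := by
  have hDm : DmM n k x = ((jetR n k (n-1) x)^2)⁻¹ • EmM n k x := by
    ext s b
    show (_ : ℝ) / _ = _
    rw [Matrix.smul_apply, smul_eq_mul, div_eq_inv_mul]
    rfl
  have hdetD : (DmM n k x).det = (((jetR n k (n-1) x)^2)⁻¹)^n * (EmM n k x).det := by
    rw [hDm, Matrix.det_smul, Fintype.card_fin]
  have hdetE : (EmM n k x).det = (GmM n k x).det := by
    rw [EmM_eq_mul hk x, Matrix.det_mul, det_LmM, one_mul]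
  have hperm := Matrix.det_permute (sg n) (GmM n k x)
  rw [show ((GmM n k x).submatrix (⇑(sg n)) id) = (fun i => GmM n k x (sg n i)) from rfl,
    det_GmM_perm hk x hr, sign_sg' hn] at hperm
  have hcast : ∀ e : ℕ, ((((-1 : ℤˣ)^e : ℤˣ) : ℤ) : ℝ) = (-1:ℝ)^e := by
    intro e
    push_cast
    norm_num
  rw [show ((((-1 : ℤˣ)^((∑ i ∈ Finset.range n, i) + (n-1)) : ℤˣ) : ℤ) : ℝ)
      = (-1:ℝ)^((∑ i ∈ Finset.range n, i) + (n-1)) from hcast _] at hperm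
  set e1 : ℕ := ∑ i ∈ Finset.range n, i with he1
  set r : ℝ := jetR n k (n-1) x with hrdef
  have h2 : (-1:ℝ)^(e1 + (n-1)) * ((-1:ℝ)^(e1 + (n-1))) = 1 := by
    rw [← pow_add]
    exact Even.neg_one_pow ⟨e1 + (n-1), rfl⟩
  have hG : (GmM n k x).det = (-1:ℝ)^(e1+(n-1)) * (-(1/k) * r^(n-1)) := by
    rw [hperm, ← mul_assoc, h2, one_mul]
  rw [Matrix.det_mul, det_CmM, hdetD, hdetE, hG]
  have hS : ∑ i ∈ Finset.range n, (i+3) = e1 + 3*n := by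
    rw [Finset.sum_add_distrib, Finset.sum_const, Finset.card_range, smul_eq_mul, he1]
    ring
  rw [hS]
  have hodd : Odd ((e1 + 3*n) + (e1 + (n-1))) := by
    rw [Nat.odd_iff]
    omega
  have hm1 : (-1:ℝ)^(e1+3*n) * (-1:ℝ)^(e1+(n-1)) = -1 := by
    rw [← pow_add]
    exact Odd.neg_one_pow hodd
  have hpow : ((r^2)⁻¹)^n * r^(n-1) = (r^(n+1))⁻¹ := by
    rw [inv_pow, ← pow_mul, show 2*n = (n+1)+(n-1) by omega, pow_add, mul_inv, mul_assoc,
      inv_mul_cancel₀ (pow_ne_zero _ hr), mul_one]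
  calc (-1:ℝ)^(e1+3*n) * (((r^2)⁻¹)^n * ((-1)^(e1+(n-1)) * (-(1/k) * r^(n-1))))
      = ((-1:ℝ)^(e1+3*n) * (-1)^(e1+(n-1))) * ((((r^2)⁻¹)^n * r^(n-1)) * (-(1/k))) := by ring
    _ = (-1) * ((r^(n+1))⁻¹ * (-(1/k))) := by rw [hm1, hpow]
    _ = (1/k) / r^(n+1) := by rw [div_eq_mul_inv]; ring

end Part4

theorem complete_functional_independence_riccati
    (n : ℕ) [NeZero n] (hn : 1 ≤ n) (k : ℝ) (hk : k ≠ 0)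
    (Ifun : ℕ → ℝ → (Fin n → ℝ) → ℝ)
    (hIfun : ∀ i t x, Ifun i t x =
      ∑ s ∈ Finset.Icc 1 i,
        (-1 : ℝ) ^ (s + 1) * t ^ (i - s) / (i - s).factorial *
          (jetRsh n k (n + 1 - s) x / jetR n k (n - 1) x))
    (t : ℝ) (x : Fin n → ℝ) (hr : jetR n k (n - 1) x ≠ 0)
    (M : Matrix (Fin n) (Fin n) ℝ)
    (hM : ∀ a b : Fin n, M a b =
      fderiv ℝ (fun y => Ifun ((a : ℕ) + 2) t y) x (Pi.single b 1))
    (Mfull : Matrix (Fin n) (Fin (n + 1)) ℝ)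
    (hMfull : ∀ (a : Fin n) (c : Fin (n + 1)), Mfull a c =
      if hc : (c : ℕ) = 0 then deriv (fun s => Ifun ((a : ℕ) + 2) s x) t
      else fderiv ℝ (fun y => Ifun ((a : ℕ) + 2) t y) x
        (Pi.single ⟨(c : ℕ) - 1, by have := c.isLt; omega⟩ 1)) :
    M.det = (1 / k) / (jetR n k (n - 1) x) ^ (n + 1) ∧
    (1 / k) / (jetR n k (n - 1) x) ^ (n + 1) ≠ 0 ∧
    Mfull.rank = n := by
  classical
  -- Step 1 : M = CmM * DmM
  have hMeq : M = CmM n t * DmM n k x := by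
    ext a b
    rw [hM a b, Matrix.mul_apply]
    have hIa : (fun y => Ifun ((a:ℕ)+2) t y) = (fun y => ∑ s ∈ Finset.Icc 1 ((a:ℕ) + 2),
        (-1:ℝ)^(s+1) * t^((a:ℕ)+2-s)/((a:ℕ)+2-s).factorial *
          (jetRsh n k (n+1-s) y / jetR n k (n-1) y)) :=
      funext fun y => hIfun _ t y
    rw [hIa, Ientry t x hr (a:ℕ) b]
    have hRHS : ∑ s' : Fin n, CmM n t a s' * DmM n k x s' b
        = ∑ i ∈ Finset.range n, (fun i => (if i ≤ (a:ℕ) then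
            (-1:ℝ)^(i+3) * t^((a:ℕ)-i)/((a:ℕ)-i).factorial else 0) *
          ((fderiv ℝ (jetRsh n k (n-1-i)) x (Pi.single b 1) * jetR n k (n-1) x
            - jetRsh n k (n-1-i) x * fderiv ℝ (jetR n k (n-1)) x (Pi.single b 1))
            / (jetR n k (n-1) x)^2)) i := by
      rw [← Fin.sum_univ_eq_sum_range]
      exact Finset.sum_congr rfl (fun s' _ => rfl)
    rw [hRHS]
    rw [← Finset.Ico_add_one_right_eq_Icc, ← Finset.sum_Ico_add _ 0 ((a:ℕ)+2) 1, ← Finset.range_eq_Ico,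
      Finset.sum_range_succ']
    have hone : (-1:ℝ)^(1+0+1) * t^((a:ℕ)+2-(1+0))/((a:ℕ)+2-(1+0)).factorial *
        ((fderiv ℝ (jetRsh n k (n+1-(1+0))) x (Pi.single b 1) * jetR n k (n-1) x
          - jetRsh n k (n+1-(1+0)) x * fderiv ℝ (jetR n k (n-1)) x (Pi.single b 1))
          / (jetR n k (n-1) x)^2) = 0 := by
      have hsh : jetRsh n k (n+1-(1+0)) = jetR n k (n-1) := by
        rw [show n+1-(1+0) = (n-1)+1 by omega, jetRsh_succ]
      rw [hsh]
      rw [show fderiv ℝ (jetR n k (n-1)) x (Pi.single b 1) * jetR n k (n-1) x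
          - jetR n k (n-1) x * fderiv ℝ (jetR n k (n-1)) x (Pi.single b 1) = 0 by ring]
      simp
    rw [hone, add_zero]
    rw [← Finset.sum_subset (Finset.range_subset_range.mpr (show (a:ℕ)+1 ≤ n from a.isLt))
      (by
        intro i _ hnotin
        rw [Finset.mem_range, not_lt] at hnotin
        rw [if_neg (by omega)]
        ring)]
    refine Finset.sum_congr rfl (fun i hi => ?_)
    rw [Finset.mem_range] at hi
    rw [show 1 + (i+1) = i + 2 by omega]
    rw [if_pos (by omega : i ≤ (a:ℕ))]
    rw [show i+2+1 = i+3 by omega, show (a:ℕ)+2-(i+2) = (a:ℕ)-i by omega,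
      show n+1-(i+2) = n-1-i by omega]
  -- Step 2 : determinant
  have hdet : M.det = (1 / k) / (jetR n k (n - 1) x) ^ (n + 1) := by
    rw [hMeq]
    exact det_main hn hk t x hr
  refine ⟨hdet, ?_, ?_⟩
  · exact div_ne_zero (one_div_ne_zero hk) (pow_ne_zero _ hr)
  · -- rank
    have hMS : M = Mfull * (Matrix.of fun (c : Fin (n+1)) (b : Fin n) =>
        if (c:ℕ) = (b:ℕ)+1 then (1:ℝ) else 0) := by
      ext a b
      rw [Matrix.mul_apply]
      have hb1 : (b:ℕ)+1 < n+1 := by have := b.isLt; omega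
      rw [Finset.sum_eq_single (⟨(b:ℕ)+1, hb1⟩ : Fin (n+1))]
      · show M a b = Mfull a _ * (if ((⟨(b:ℕ)+1, hb1⟩ : Fin (n+1)) : ℕ) = (b:ℕ)+1 then (1:ℝ) else 0)
        rw [if_pos rfl, mul_one, hMfull, dif_neg (by simp), hM]
        congr 2
      · intro c _ hne
        show Mfull a c * (if (c:ℕ) = (b:ℕ)+1 then (1:ℝ) else 0) = 0
        rw [if_neg (fun hcon => hne (Fin.ext (by simp [hcon])))]
        ring
      · intro hcon
        exact absurd (Finset.mem_univ _) hcon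
    have hdetne : M.det ≠ 0 := by
      rw [hdet]
      exact div_ne_zero (one_div_ne_zero hk) (pow_ne_zero _ hr)
    have hMrank : M.rank = n := by
      rw [Matrix.rank_of_isUnit M ((Matrix.isUnit_iff_isUnit_det M).mpr
        (isUnit_iff_ne_zero.mpr hdetne)), Fintype.card_fin]
    have hle : Mfull.rank ≤ n := by
      have := Mfull.rank_le_card_height
      simpa using this
    have hmul : (Mfull * (Matrix.of fun (c : Fin (n+1)) (b : Fin n) =>
        if (c:ℕ) = (b:ℕ)+1 then (1:ℝ) else 0)).rank ≤ Mfull.rank :=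
      Matrix.rank_mul_le_left _ _
    rw [← hMS] at hmul
    omega
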